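/- arXiv:2001.11172 — 3 statements merged into one kernel-verified Lean document; each statement's English description precedes it below -/
import Mathlib

section
/- Let (ν¹_k)_{k≥1} and (ν²_k)_{k≥1} be sequences of nonnegative finite measures on a measurable space M with ∑_k ν^i_k = ν^i probability measures, and let T : M → M be measurable. Suppose T^k_* ν¹_k = T^k_* ν²_k for every k, and ∑_{k>n} ν^i_k(M) ≤ (1−Θ)^{n/N} for i = 1,2 and all n ≥ 0, where Θ ∈ (0,1) and N ≥ 1. Then for every n ≥ 0, ‖T^n_* ν¹ − T^n_* ν²‖_{TV} ≤ 2(1−Θ)^{n/N}. -/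
/-!
After `n` iterations the pieces `ν¹_k`, `ν²_k` with `k ≤ n` have identical images, so on every
measurable set the two pushforwards differ by at most the total mass of the pieces with `k > n`.
Each of the two halves of the Hahn–Jordan expression for the total variation is therefore bounded
by one tail sum.
-/

open MeasureTheory
open scoped ENNReal

/-- The total variation norm `‖μ − ν‖_TV = |μ − ν|(univ)` of the difference of two finite
measures, expressed via the Hahn–Jordan formula
`|μ − ν|(univ) = sup_A [(μ(A) − ν(A)) + (ν(Aᶜ) − μ(Aᶜ))]`. -/
noncomputable def tvDist {α : Type*} [MeasurableSpace α] (μ ν : Measure α) : ℝ≥0∞ :=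
  ⨆ (A : Set α) (_ : MeasurableSet A), ((μ A - ν A) + (ν Aᶜ - μ Aᶜ))

section TotalVariation

variable {α β ι : Type*} [MeasurableSpace α] [MeasurableSpace β]

theorem tvDist_le_add {μ ν : Measure α} {ε δ : ℝ≥0∞}
    (h₁ : ∀ A, MeasurableSet A → μ A ≤ ν A + ε) (h₂ : ∀ A, MeasurableSet A → ν A ≤ μ A + δ) :
    tvDist μ ν ≤ ε + δ :=
  iSup₂_le fun A hA => add_le_add (tsub_le_iff_left.mpr (h₁ A hA))
    (tsub_le_iff_left.mpr (h₂ Aᶜ hA.compl))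

theorem MeasureTheory.Measure.map_sum_apply_le_add_tsum {f : α → β} (hf : Measurable f)
    {ρ σ : ι → Measure α} (p : ι → Prop) [DecidablePred p]
    (hcouple : ∀ k, ¬ p k → Measure.map f (ρ k) = Measure.map f (σ k))
    {A : Set β} (hA : MeasurableSet A) :
    Measure.map f (Measure.sum ρ) A ≤
      Measure.map f (Measure.sum σ) A + ∑' k, if p k then ρ k Set.univ else 0 := by
  rw [Measure.map_apply hf hA, Measure.map_apply hf hA, Measure.sum_apply _ (hf hA),
    Measure.sum_apply _ (hf hA), ← ENNReal.tsum_add]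
  refine ENNReal.tsum_le_tsum fun k => ?_
  by_cases hk : p k
  · simpa only [hk, if_true] using le_add_left (measure_mono (Set.subset_univ _))
  · simp only [hk, if_false, add_zero]
    rw [← Measure.map_apply hf hA, ← Measure.map_apply hf hA, hcouple k hk]

theorem tvDist_map_sum_le {f : α → β} (hf : Measurable f)
    {ρ σ : ι → Measure α} (p : ι → Prop) [DecidablePred p]
    (hcouple : ∀ k, ¬ p k → Measure.map f (ρ k) = Measure.map f (σ k)) :
    tvDist (Measure.map f (Measure.sum ρ)) (Measure.map f (Measure.sum σ)) ≤
      (∑' k, if p k then ρ k Set.univ else 0) + ∑' k, if p k then σ k Set.univ else 0 :=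
  tvDist_le_add (fun _ hA => Measure.map_sum_apply_le_add_tsum hf p hcouple hA)
    (fun _ hA => Measure.map_sum_apply_le_add_tsum hf p (fun k hk => (hcouple k hk).symm) hA)

theorem MeasureTheory.Measure.map_iterate_eq_of_le {T : α → α}
    (hT : Measurable T) {μ ν : Measure α} {k n : ℕ} (hkn : k ≤ n)
    (h : Measure.map (T^[k]) μ = Measure.map (T^[k]) ν) :
    Measure.map (T^[n]) μ = Measure.map (T^[n]) ν := by
  rw [← Nat.sub_add_cancel hkn, Function.iterate_add,
    ← Measure.map_map (hT.iterate _) (hT.iterate k), h,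
    Measure.map_map (hT.iterate _) (hT.iterate k)]

end TotalVariation

theorem stmt8_general {M : Type*} [MeasurableSpace M] (T : M → M) (hT : Measurable T)
    (ν₁ ν₂ : ℕ → Measure M)
    (μ₁ μ₂ : Measure M)
    (hμ₁ : μ₁ = Measure.sum ν₁) (hμ₂ : μ₂ = Measure.sum ν₂)
    (Θ : ℝ) (N : ℕ)
    (hcouple : ∀ k, Measure.map (T^[k]) (ν₁ k) = Measure.map (T^[k]) (ν₂ k))
    (htail₁ : ∀ n : ℕ, (∑' k : ℕ, if n < k then ν₁ k Set.univ else 0) ≤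
      ENNReal.ofReal ((1 - Θ) ^ ((n:ℝ) / (N:ℝ))))
    (htail₂ : ∀ n : ℕ, (∑' k : ℕ, if n < k then ν₂ k Set.univ else 0) ≤
      ENNReal.ofReal ((1 - Θ) ^ ((n:ℝ) / (N:ℝ)))) :
    ∀ n : ℕ, tvDist (Measure.map (T^[n]) μ₁) (Measure.map (T^[n]) μ₂) ≤
      ENNReal.ofReal (2 * (1 - Θ) ^ ((n:ℝ) / (N:ℝ))) := by
  intro n
  subst hμ₁ hμ₂
  set t := (1 - Θ) ^ ((n:ℝ) / (N:ℝ))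
  calc tvDist (Measure.map (T^[n]) (Measure.sum ν₁)) (Measure.map (T^[n]) (Measure.sum ν₂))
      ≤ (∑' k, if n < k then ν₁ k Set.univ else 0) + ∑' k, if n < k then ν₂ k Set.univ else 0 :=
        tvDist_map_sum_le (hT.iterate n) (n < ·) fun k hk =>
          Measure.map_iterate_eq_of_le hT (not_lt.mp hk) (hcouple k)
    _ ≤ ENNReal.ofReal t + ENNReal.ofReal t := add_le_add (htail₁ n) (htail₂ n)
    _ = ENNReal.ofReal (2 * t) := by
        rw [ENNReal.ofReal_mul zero_le_two, ENNReal.ofReal_ofNat, two_mul]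

/-- The equidistribution estimate from the coupling lemma: if the pieces `ν¹_k, ν²_k` are
coupled after `k` iterations and the tails decay like `(1−Θ)^{n/N}`, then
`‖T^n_* ν¹ − T^n_* ν²‖_TV ≤ 2(1−Θ)^{n/N}`. -/
theorem stmt8 {M : Type*} [MeasurableSpace M] (T : M → M) (hT : Measurable T)
    (ν₁ ν₂ : ℕ → Measure M) (hf₁ : ∀ k, IsFiniteMeasure (ν₁ k))
    (hf₂ : ∀ k, IsFiniteMeasure (ν₂ k))
    (μ₁ μ₂ : Measure M) [IsProbabilityMeasure μ₁] [IsProbabilityMeasure μ₂]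
    (hμ₁ : μ₁ = Measure.sum ν₁) (hμ₂ : μ₂ = Measure.sum ν₂)
    (Θ : ℝ) (N : ℕ) (hΘ : Θ ∈ Set.Ioo (0:ℝ) 1) (hN : 1 ≤ N)
    (hcouple : ∀ k, Measure.map (T^[k]) (ν₁ k) = Measure.map (T^[k]) (ν₂ k))
    (htail₁ : ∀ n : ℕ, (∑' k : ℕ, if n < k then ν₁ k Set.univ else 0) ≤
      ENNReal.ofReal ((1 - Θ) ^ ((n:ℝ) / (N:ℝ))))
    (htail₂ : ∀ n : ℕ, (∑' k : ℕ, if n < k then ν₂ k Set.univ else 0) ≤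
      ENNReal.ofReal ((1 - Θ) ^ ((n:ℝ) / (N:ℝ)))) :
    ∀ n : ℕ, tvDist (Measure.map (T^[n]) μ₁) (Measure.map (T^[n]) μ₂) ≤
      ENNReal.ofReal (2 * (1 - Θ) ^ ((n:ℝ) / (N:ℝ))) :=
  stmt8_general T hT ν₁ ν₂ μ₁ μ₂ hμ₁ hμ₂ Θ N hcouple htail₁ htail₂
end

section
/- Fix λ ∈ (0,1) and q ∈ (0,1). Define a_k = λ^{k−1}(1−λ), b_N = λ^N, Λ_1 = 1/a_1, and Λ_k = 1/a_2 for k ≥ 2. Then for every N ≥ 1, (∑_{k=N+1}^∞ a_k^{1−q} Λ_k^{−q}) / b_N^{1−q} = λ^q (1−λ)/(1 − λ^{1−q}). Moreover, this quantity is < 1 if and only if λ^{1−q} < 1 − λ, and there exists q ∈ (0,1) making it < 1 if and only if λ ∈ (0, 1/2). -/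
/-- One-step expansion computation for the Bruin–Todd map `T_λ`: the tail ratio equals
`λ^q(1−λ)/(1−λ^{1−q})`; it is `< 1` iff `λ^{1−q} < 1−λ`, and some `q ∈ (0,1)` makes it
`< 1` iff `λ < 1/2`. -/
theorem stmt13 (l : ℝ) (hl : l ∈ Set.Ioo (0:ℝ) 1) :
    (∀ q ∈ Set.Ioo (0:ℝ) 1, ∀ N : ℕ, 1 ≤ N →
      (∑' j : ℕ, ((l ^ (N + j) * (1 - l)) ^ (1 - q)) * ((l * (1 - l)) ^ q)) /
          ((l ^ N : ℝ) ^ (1 - q)) =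
        l ^ q * (1 - l) / (1 - l ^ (1 - q))) ∧
    (∀ q ∈ Set.Ioo (0:ℝ) 1,
      (l ^ q * (1 - l) / (1 - l ^ (1 - q)) < 1 ↔ l ^ (1 - q) < 1 - l)) ∧
    ((∃ q ∈ Set.Ioo (0:ℝ) 1, l ^ q * (1 - l) / (1 - l ^ (1 - q)) < 1) ↔ l < 1/2) := by
  obtain ⟨hl0, hl1⟩ := hl
  have h1l : (0:ℝ) < 1 - l := by linarith
  have key2 : ∀ q ∈ Set.Ioo (0:ℝ) 1,
      (l ^ q * (1 - l) / (1 - l ^ (1 - q)) < 1 ↔ l ^ (1 - q) < 1 - l) := by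
    intro q ⟨hq0, hq1⟩
    set x := l ^ q with hx
    set y := l ^ (1 - q) with hy
    have hx0 : 0 < x := Real.rpow_pos_of_pos hl0 _
    have hy0 : 0 < y := Real.rpow_pos_of_pos hl0 _
    have hx1 : x < 1 := Real.rpow_lt_one hl0.le hl1 hq0
    have hy1 : y < 1 := Real.rpow_lt_one hl0.le hl1 (by linarith)
    have hxy : x * y = l := by
      rw [hx, hy, ← Real.rpow_add hl0]; norm_num
    rw [div_lt_one (by linarith)]
    constructor
    · intro h; nlinarith
    · intro h; nlinarith
  refine ⟨?_, key2, ?_⟩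
  · intro q ⟨hq0, hq1⟩ N hN
    set r := l ^ (1 - q) with hr
    have hr0 : 0 < r := Real.rpow_pos_of_pos hl0 _
    have hr1 : r < 1 := Real.rpow_lt_one hl0.le hl1 (by linarith)
    have hpow : ∀ n : ℕ, (l ^ n : ℝ) ^ (1 - q) = r ^ n := by
      intro n
      rw [← Real.rpow_natCast l n, ← Real.rpow_natCast r n, hr,
        ← Real.rpow_mul hl0.le, ← Real.rpow_mul hl0.le, mul_comm]
    have hterm : ∀ j : ℕ, ((l ^ (N + j) * (1 - l)) ^ (1 - q)) * ((l * (1 - l)) ^ q)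
        = (r ^ N * (l ^ q * (1 - l))) * r ^ j := by
      intro j
      have hAB : (1 - l) ^ (1 - q) * (1 - l) ^ q = 1 - l := by
        rw [← Real.rpow_add h1l]; norm_num
      rw [Real.mul_rpow (by positivity) h1l.le, Real.mul_rpow hl0.le h1l.le,
        hpow (N + j), pow_add]
      linear_combination (r ^ N * r ^ j * l ^ q) * hAB
    rw [tsum_congr hterm, tsum_mul_left, tsum_geometric_of_lt_one hr0.le hr1, hpow N]
    have hrn : (r : ℝ) ^ N ≠ 0 := by positivity
    rw [show r ^ N * (l ^ q * (1 - l)) * (1 - r)⁻¹ / r ^ N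
        = l ^ q * (1 - l) * (1 - r)⁻¹ * (r ^ N / r ^ N) by ring,
      div_self hrn, mul_one, ← div_eq_mul_inv]
  · constructor
    · rintro ⟨q, hq, hlt⟩
      rw [key2 q hq] at hlt
      by_contra h
      push_neg at h
      have h1 : l ^ (1:ℝ) ≤ l ^ (1 - q) :=
        Real.rpow_le_rpow_of_exponent_ge hl0 hl1.le (by linarith [hq.1])
      rw [Real.rpow_one] at h1
      have : (1:ℝ)/2 ≤ l := by linarith
      linarith
    · intro h
      have hll : Real.log l < 0 := Real.log_neg hl0 hl1
      have hl1l : Real.log (1 - l) < 0 := Real.log_neg h1l (by linarith)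
      have hlog : Real.log l < Real.log (1 - l) :=
        Real.log_lt_log hl0 (by linarith)
      set R := Real.log (1 - l) / Real.log l with hR
      have hR0 : 0 < R := div_pos_iff.mpr (Or.inr ⟨hl1l, hll⟩)
      have heq : R * Real.log l = Real.log (1 - l) := div_mul_cancel₀ _ hll.ne
      have hR1 : R < 1 := by nlinarith
      refine ⟨(1 - R) / 2, ⟨by linarith, by linarith⟩, ?_⟩
      rw [key2 _ ⟨by linarith, by linarith⟩]
      have hexp : (1 - (1 - R) / 2) * Real.log l < Real.log (1 - l) := by
        nlinarith
      calc l ^ (1 - (1 - R) / 2) = Real.exp ((1 - (1 - R) / 2) * Real.log l) := by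
            rw [Real.rpow_def_of_pos hl0, mul_comm]
        _ < Real.exp (Real.log (1 - l)) := Real.exp_lt_exp.mpr hexp
        _ = 1 - l := Real.exp_log h1l
end

section
/- Let ρ : U → ℝ satisfy e^{−C_r}/|U| ≤ ρ ≤ e^{C_r}/|U| and |log ρ(x) − log ρ(y)| ≤ C_r γ^{s(x,y)} on an interval U of length |U| > 0, and let 0 < r < e^{−C_r}/|U|·|U| = e^{−C_r} (so ρ − r > 0). Then for all x, y ∈ U: |log(ρ(x) − r) − log(ρ(y) − r)| ≤ C_r γ^{s(x,y)} + (r C_r e^{C_r}/((1 − r e^{C_r})|U|)) γ^{s(x,y)}. -/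
/-! In logarithmic coordinates `t = log ρ`, subtracting `r` is the map `t ↦ log (eᵗ - r)`,
whose derivative `eᵗ / (eᵗ - r)` is at most `1 / (1 - r e^{C_r})` wherever
`ρ = eᵗ ≥ e^{-C_r}`. Since `|U| ≤ 1`, the pointwise lower bound gives `ρ ≥ e^{-C_r}`, so the
mean value theorem bounds the new log-oscillation by `C_r γ^s / (1 - r e^{C_r})`, which is at
most the claimed constant. -/

open Real Set

lemma abs_log_sub_sub_log_sub_le {m r u v : ℝ} (hr : 0 ≤ r) (hrm : r < m) (hu : m ≤ u)
    (hv : m ≤ v) : |log (u - r) - log (v - r)| ≤ m / (m - r) * |log u - log v| := by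
  have hm : 0 < m := hr.trans_lt hrm
  have hexp : ∀ t ∈ Ici (log m), m ≤ exp t := fun t ht => (log_le_iff_le_exp hm).1 ht
  have hpos : ∀ t ∈ Ici (log m), 0 < exp t - r := fun t ht => by linarith [hexp t ht]
  have hderiv : ∀ t ∈ Ici (log m),
      HasDerivWithinAt (fun t => log (exp t - r)) (exp t / (exp t - r)) (Ici (log m)) t :=
    fun t ht => (((hasDerivAt_exp t).sub_const r).log (hpos t ht).ne').hasDerivWithinAt
  have hbound : ∀ t ∈ Ici (log m), ‖exp t / (exp t - r)‖ ≤ m / (m - r) := fun t ht => by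
    rw [Real.norm_of_nonneg (div_nonneg (exp_pos t).le (hpos t ht).le),
      div_le_div_iff₀ (hpos t ht) (sub_pos.2 hrm)]
    nlinarith [hexp t ht]
  have hmem : ∀ {w}, m ≤ w → log w ∈ Ici (log m) := fun hw => log_le_log hm hw
  have := (convex_Ici (log m)).norm_image_sub_le_of_norm_hasDerivWithin_le hderiv hbound
    (hmem hv) (hmem hu)
  simpa only [exp_log (hm.trans_le hu), exp_log (hm.trans_le hv), Real.norm_eq_abs] using this

theorem stmt19_general (a b Cr γ r : ℝ) (hab : a < b) (hsub : Set.Icc a b ⊆ Set.Icc (0:ℝ) 1)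
    (hr : 0 < r) (hr' : r < Real.exp (-Cr))
    (ρ : ℝ → ℝ) (s : ℝ → ℝ → ℕ)
    (hbound : ∀ x ∈ Set.Icc a b,
      Real.exp (-Cr) / (b - a) ≤ ρ x ∧ ρ x ≤ Real.exp Cr / (b - a))
    (hreg : ∀ x ∈ Set.Icc a b, ∀ y ∈ Set.Icc a b,
      |Real.log (ρ x) - Real.log (ρ y)| ≤ Cr * γ ^ s x y) :
    ∀ x ∈ Set.Icc a b, ∀ y ∈ Set.Icc a b,
      |Real.log (ρ x - r) - Real.log (ρ y - r)| ≤
        Cr * γ ^ s x y +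
          r * Cr * Real.exp Cr / ((1 - r * Real.exp Cr) * (b - a)) * γ ^ s x y := by
  intro x hx y hy
  have hL : 0 < b - a := sub_pos.2 hab
  have hL1 : b - a ≤ 1 := by
    have ha := (hsub (left_mem_Icc.2 hab.le)).1
    have hb := (hsub (right_mem_Icc.2 hab.le)).2
    linarith
  have hlow : ∀ z ∈ Icc a b, exp (-Cr) ≤ ρ z := fun z hz =>
    (le_div_self (exp_pos _).le hL hL1).trans (hbound z hz).1
  have hq : r * exp Cr < 1 := by
    simpa [← exp_add] using mul_lt_mul_of_pos_right hr' (exp_pos Cr)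
  have hfactor : exp (-Cr) / (exp (-Cr) - r) = 1 + r * exp Cr / (1 - r * exp Cr) := by
    rw [one_add_div (sub_pos.2 hq).ne', exp_neg]
    field_simp
    ring_nf
  set q := r * exp Cr
  have hq0 : 0 ≤ q := by positivity
  have hshrink : q / (1 - q) ≤ q / ((1 - q) * (b - a)) :=
    div_le_div_of_nonneg_left hq0 (mul_pos (sub_pos.2 hq) hL)
      (mul_le_of_le_one_right (sub_pos.2 hq).le hL1)
  have hA : 0 ≤ Cr * γ ^ s x y := (abs_nonneg _).trans (hreg x hx y hy)
  calc |log (ρ x - r) - log (ρ y - r)|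
      ≤ (1 + q / (1 - q)) * (Cr * γ ^ s x y) := by
        rw [← hfactor]
        exact (abs_log_sub_sub_log_sub_le hr.le hr' (hlow x hx) (hlow y hy)).trans
          (mul_le_mul_of_nonneg_left (hreg x hx y hy) (by positivity))
    _ ≤ (1 + q / ((1 - q) * (b - a))) * (Cr * γ ^ s x y) := by gcongr
    _ = _ := by ring

/-- Key estimate in the splitting lemma: subtracting a small constant `r` from a regular
density `ρ` on the magnet `U = [a,b]` keeps the log-regularity with a slightly worse
constant. -/
theorem stmt19 (a b Cr γ r : ℝ) (hab : a < b) (hsub : Set.Icc a b ⊆ Set.Icc (0:ℝ) 1)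
    (hCr : 0 < Cr) (hγ : γ ∈ Set.Ioo (0:ℝ) 1)
    (hr : 0 < r) (hr' : r < Real.exp (-Cr))
    (ρ : ℝ → ℝ) (s : ℝ → ℝ → ℕ)
    (hbound : ∀ x ∈ Set.Icc a b,
      Real.exp (-Cr) / (b - a) ≤ ρ x ∧ ρ x ≤ Real.exp Cr / (b - a))
    (hreg : ∀ x ∈ Set.Icc a b, ∀ y ∈ Set.Icc a b,
      |Real.log (ρ x) - Real.log (ρ y)| ≤ Cr * γ ^ s x y) :
    ∀ x ∈ Set.Icc a b, ∀ y ∈ Set.Icc a b,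
      |Real.log (ρ x - r) - Real.log (ρ y - r)| ≤
        Cr * γ ^ s x y +
          r * Cr * Real.exp Cr / ((1 - r * Real.exp Cr) * (b - a)) * γ ^ s x y :=
  stmt19_general a b Cr γ r hab hsub hr hr' ρ s hbound hreg
end
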